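/- arXiv:1603.04929 — 4 statements merged into one kernel-verified Lean document; each statement's English description precedes it below -/
import Mathlib

section
/- If the bias sequence satisfies f(n) = a/n + b/n² + O(1/n³) as n → ∞, then the jackknife bias estimate satisfies (n−1)·(f(n−1) − f(n)) = a/n + O(1/n²) = f(n) + O(1/n²) as n → ∞; that is, the expected value of the jackknife bias estimate B̂_J[θ̂_n] = (n−1)(θ̄ᴶ_n − θ̂_n) equals the true bias f(n) up to an error of order O(1/n²). -/
/-!
Write `f n = a / n + b / n² + g n` with `g = O(n⁻³)`. The jackknife operator
`J f n = (n - 1) (f (n - 1) - f n)` is linear, reproduces `a / n` exactly (for `n ≥ 2`),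
sends `1 / n²` to `1 / n² + 1 / (n (n - 1)) = O(n⁻²)`, and costs only one power of `n` on `g`.
Hence `J f = a / n + O(n⁻²)`, and `f = a / n + O(n⁻²)` as well.
-/

open Filter Asymptotics

noncomputable section

def jackknifeBias (f : ℕ → ℝ) (n : ℕ) : ℝ := ((n : ℝ) - 1) * (f (n - 1) - f n)

lemma isBigO_one_div_natCast_pow_of_le {j k : ℕ} (hjk : j ≤ k) :
    (fun n : ℕ => 1 / (n : ℝ) ^ k) =O[atTop] fun n : ℕ => 1 / (n : ℝ) ^ j := by
  refine IsBigO.of_bound 1 ?_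
  filter_upwards [eventually_ge_atTop 1] with n hn
  have hn' : (1 : ℝ) ≤ n := by exact_mod_cast hn
  simp only [one_mul, norm_div, norm_one, norm_pow, Real.norm_natCast]
  exact one_div_pow_le_one_div_pow_of_le hn' hjk

lemma isBigO_one_div_natCast_sub_one_pow (k : ℕ) :
    (fun n : ℕ => 1 / ((n - 1 : ℕ) : ℝ) ^ k) =O[atTop] fun n : ℕ => 1 / (n : ℝ) ^ k := by
  have hlin : (fun n : ℕ => (n : ℝ)) =O[atTop] fun n : ℕ => ((n - 1 : ℕ) : ℝ) := by
    refine IsBigO.of_bound 2 ?_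
    filter_upwards [eventually_ge_atTop 2] with n hn
    have hn' : (2 : ℝ) ≤ n := by exact_mod_cast hn
    rw [Nat.cast_pred (by omega), Real.norm_natCast, Real.norm_eq_abs, abs_of_nonneg] <;> linarith
  have hinv := (hlin.inv_rev (Eventually.of_forall fun n hn => by simp_all)).pow k
  simpa only [one_div, inv_pow] using hinv

lemma Asymptotics.IsBigO.comp_natSub_one {g : ℕ → ℝ} {k : ℕ}
    (hg : g =O[atTop] fun n : ℕ => 1 / (n : ℝ) ^ k) :
    (fun n : ℕ => g (n - 1)) =O[atTop] fun n : ℕ => 1 / (n : ℝ) ^ k :=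
  (hg.comp_tendsto (tendsto_sub_atTop_nat 1)).trans (isBigO_one_div_natCast_sub_one_pow k)

lemma isBigO_jackknifeBias {g : ℕ → ℝ} {k : ℕ}
    (hg : g =O[atTop] fun n : ℕ => 1 / (n : ℝ) ^ (k + 1)) :
    jackknifeBias g =O[atTop] fun n : ℕ => 1 / (n : ℝ) ^ k := by
  have hfactor : (fun n : ℕ => (n : ℝ) - 1) =O[atTop] fun n : ℕ => (n : ℝ) := by
    refine IsBigO.of_bound 1 ?_
    filter_upwards [eventually_ge_atTop 1] with n hn
    have hn' : (1 : ℝ) ≤ n := by exact_mod_cast hn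
    rw [Real.norm_natCast, Real.norm_eq_abs, abs_of_nonneg] <;> linarith
  have hprod := hfactor.mul (hg.comp_natSub_one.sub hg)
  refine hprod.congr' EventuallyEq.rfl ?_
  filter_upwards [eventually_ne_atTop 0] with n hn
  field_simp
  ring

lemma jackknifeBias_one_div {n : ℕ} (hn : 2 ≤ n) :
    jackknifeBias (fun n : ℕ => 1 / (n : ℝ)) n = 1 / n := by
  have hn' : (2 : ℝ) ≤ n := by exact_mod_cast hn
  rw [jackknifeBias, Nat.cast_pred (by omega)]
  field_simp [(by linarith : (n : ℝ) - 1 ≠ 0)]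
  ring

lemma isBigO_jackknifeBias_one_div_sq :
    jackknifeBias (fun n : ℕ => 1 / (n : ℝ) ^ 2) =O[atTop] fun n : ℕ => 1 / (n : ℝ) ^ 2 := by
  have hcross : (fun n : ℕ => 1 / (n : ℝ) * (1 / ((n - 1 : ℕ) : ℝ)))
      =O[atTop] fun n : ℕ => 1 / (n : ℝ) ^ 2 :=
    ((isBigO_refl _ _).mul (by simpa using isBigO_one_div_natCast_sub_one_pow 1)).congr_right
      fun n => by ring
  refine ((isBigO_refl _ _).add hcross).congr' ?_ EventuallyEq.rfl
  filter_upwards [eventually_ge_atTop 2] with n hn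
  have hn' : (2 : ℝ) ≤ n := by exact_mod_cast hn
  rw [jackknifeBias, Nat.cast_pred (by omega)]
  field_simp [(by linarith : (n : ℝ) - 1 ≠ 0)]
  ring

end

theorem stmt9 (a b : ℝ) (f : ℕ → ℝ)
    (hf : (fun n : ℕ => f n - (a / (n : ℝ) + b / (n : ℝ) ^ 2))
        =O[atTop] fun n : ℕ => 1 / (n : ℝ) ^ 3) :
    ((fun n : ℕ => ((n : ℝ) - 1) * (f (n - 1) - f n) - a / (n : ℝ))
        =O[atTop] fun n : ℕ => 1 / (n : ℝ) ^ 2) ∧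
    ((fun n : ℕ => ((n : ℝ) - 1) * (f (n - 1) - f n) - f n)
        =O[atTop] fun n : ℕ => 1 / (n : ℝ) ^ 2) := by
  set g := fun n : ℕ => f n - (a / (n : ℝ) + b / (n : ℝ) ^ 2) with hg
  have hsplit : (fun n : ℕ => b * jackknifeBias (fun n : ℕ => 1 / (n : ℝ) ^ 2) n
      + jackknifeBias g n) =ᶠ[atTop]
      fun n : ℕ => ((n : ℝ) - 1) * (f (n - 1) - f n) - a / (n : ℝ) := by
    filter_upwards [eventually_ge_atTop 2] with n hn
    have ha := jackknifeBias_one_div hn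
    simp only [jackknifeBias, hg] at ha ⊢
    linear_combination (-a) * ha
  have hmain := ((isBigO_jackknifeBias_one_div_sq.const_mul_left b).add
    (isBigO_jackknifeBias hf)).congr' hsplit EventuallyEq.rfl
  have hbias : (fun n : ℕ => f n - a / (n : ℝ)) =O[atTop] fun n : ℕ => 1 / (n : ℝ) ^ 2 :=
    ((hf.trans (isBigO_one_div_natCast_pow_of_le (by norm_num))).add
      ((isBigO_refl _ _).const_mul_left b)).congr_left fun n => by ring
  exact ⟨hmain, (hmain.sub hbias).congr_left fun n => by ring⟩
end

section
/- If the bias sequence satisfies f(n) = a/n + b/n² + O(1/n³) as n → ∞, then n·f(n) − (n−1)·f(n−1) = O(1/n²) as n → ∞; that is, the bias of the jackknife bias-corrected estimate θ̂ᴶ_n = n·θ̂_n − (n−1)·θ̄ᴶ_n is of order O(1/n²), an order of magnitude smaller than the O(1/n) bias of θ̂_n. -/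
/-!
Write `n f(n) = a + b/n + R(n)`; the hypothesis makes `R(n) = n · O(1/n³) = O(1/n²)`. In the
jackknife difference the constant `a` cancels, leaving `R(n) - R(n-1) + b (1/n - 1/(n-1))`,
and `1/n - 1/(n-1) = -1/(n(n-1)) = O(1/n²)`.
-/

open Filter Asymptotics

namespace Nat

lemma isBigO_one_div_cast_sub_one_pow (k : ℕ) :
    (fun n : ℕ => 1 / ((n - 1 : ℕ) : ℝ) ^ k) =O[atTop] fun n : ℕ => 1 / (n : ℝ) ^ k := by
  refine IsBigO.of_bound (2 ^ k) ?_
  filter_upwards [eventually_ge_atTop 2] with n hn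
  have hpos : (0 : ℝ) < ((n - 1 : ℕ) : ℝ) := by exact_mod_cast (by omega : 0 < n - 1)
  have hle : (n : ℝ) ≤ 2 * ((n - 1 : ℕ) : ℝ) := by exact_mod_cast (by omega : n ≤ 2 * (n - 1))
  rw [Real.norm_of_nonneg (by positivity), Real.norm_of_nonneg (by positivity),
    mul_one_div, div_le_div_iff₀ (by positivity) (by positivity), one_mul, ← mul_pow]
  gcongr

lemma isBigO_comp_sub_one {h : ℕ → ℝ} {k : ℕ}
    (hh : h =O[atTop] fun n : ℕ => 1 / (n : ℝ) ^ k) :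
    (fun n : ℕ => h (n - 1)) =O[atTop] fun n : ℕ => 1 / (n : ℝ) ^ k :=
  (hh.comp_tendsto (tendsto_sub_atTop_nat 1)).trans (isBigO_one_div_cast_sub_one_pow k)

lemma isBigO_one_div_sub_one_div_cast_sub_one :
    (fun n : ℕ => 1 / (n : ℝ) - 1 / ((n - 1 : ℕ) : ℝ)) =O[atTop] fun n : ℕ => 1 / (n : ℝ) ^ 2 := by
  have hprod := ((isBigO_refl (fun n : ℕ => 1 / (n : ℝ)) atTop).mul
    (isBigO_comp_sub_one (k := 1) (by simpa using isBigO_refl (fun n : ℕ => 1 / (n : ℝ)) atTop))).neg_left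
  refine hprod.congr' ?_ (Eventually.of_forall fun n => by ring)
  filter_upwards [eventually_ge_atTop 2] with n hn
  have hn0 : (n : ℝ) ≠ 0 := by positivity
  rw [Nat.cast_sub (by omega : 1 ≤ n), Nat.cast_one]
  have hn1 : (n : ℝ) - 1 ≠ 0 := sub_ne_zero.2 (by exact_mod_cast (by omega : n ≠ 1))
  field_simp
  ring

lemma isBigO_cast_mul {g : ℕ → ℝ} {k : ℕ}
    (hg : g =O[atTop] fun n : ℕ => 1 / (n : ℝ) ^ (k + 1)) :
    (fun n : ℕ => (n : ℝ) * g n) =O[atTop] fun n : ℕ => 1 / (n : ℝ) ^ k := by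
  refine ((isBigO_refl (fun n : ℕ => (n : ℝ)) atTop).mul hg).congr' EventuallyEq.rfl ?_
  filter_upwards [eventually_ne_atTop 0] with n hn
  field_simp
  ring

end Nat

theorem stmt10 (a b : ℝ) (f : ℕ → ℝ)
    (hf : (fun n : ℕ => f n - (a / (n : ℝ) + b / (n : ℝ) ^ 2))
        =O[atTop] fun n : ℕ => 1 / (n : ℝ) ^ 3) :
    (fun n : ℕ => (n : ℝ) * f n - ((n : ℝ) - 1) * f (n - 1))
      =O[atTop] fun n : ℕ => 1 / (n : ℝ) ^ 2 := by
  have hR : (fun n : ℕ => (n : ℝ) * f n - (a + b / n)) =O[atTop] fun n : ℕ => 1 / (n : ℝ) ^ 2 := by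
    refine (Nat.isBigO_cast_mul hf).congr' ?_ EventuallyEq.rfl
    filter_upwards [eventually_ne_atTop 0] with n hn
    field_simp
  have hb := Nat.isBigO_one_div_sub_one_div_cast_sub_one.const_mul_left b
  refine ((hR.sub (Nat.isBigO_comp_sub_one hR)).add hb).congr' ?_ EventuallyEq.rfl
  filter_upwards [eventually_ge_atTop 1] with n hn
  rw [Nat.cast_sub hn, Nat.cast_one]
  ring
end

section
/- Gauss–Markov (slope): the OLS estimate β̂₁ is the best linear unbiased estimate of β₁. Precisely, for any coefficients α_1,…,α_n ∈ ℝ satisfying the unbiasedness constraints Σ_i α_i = 0 and Σ_i α_iX_i = 1, one has Σ_i α_i² ≥ 1/S_XX — equivalently, the linear unbiased estimator Σ_i α_iY_i has variance σ²·Σα_i² ≥ σ²/S_XX = Var[β̂₁] — with equality if and only if α_i = (X_i − X̄)/S_XX for all i. -/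
/-!
Since `∑ αᵢ = 0`, the constraint `∑ αᵢ Xᵢ = 1` says `∑ αᵢ vᵢ = 1` for the centred vector
`vᵢ = Xᵢ - X̄`, and then `∑ (αᵢ - vᵢ / S)² = ∑ αᵢ² - 1 / S` with `S = ∑ vᵢ²`:
the OLS weights are the orthogonal projection of `α` onto the line spanned by `v`.
-/

open Finset

section Projection

variable {ι : Type*} (s : Finset ι) {a v : ι → ℝ}

lemma sum_sq_ne_zero_of_sum_mul_eq_one (h : ∑ i ∈ s, a i * v i = 1) :
    ∑ i ∈ s, v i ^ 2 ≠ 0 := by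
  intro hv
  have hv0 : ∀ i ∈ s, v i = 0 := fun i hi =>
    pow_eq_zero_iff two_ne_zero |>.mp <|
      (sum_eq_zero_iff_of_nonneg fun j _ => sq_nonneg (v j)).mp hv i hi
  rw [sum_eq_zero fun i hi => by rw [hv0 i hi, mul_zero]] at h
  exact zero_ne_one h

lemma sum_sq_sub_div_sum_sq (h : ∑ i ∈ s, a i * v i = 1) :
    ∑ i ∈ s, (a i - v i / ∑ j ∈ s, v j ^ 2) ^ 2 = ∑ i ∈ s, a i ^ 2 - 1 / ∑ j ∈ s, v j ^ 2 := by
  set S := ∑ j ∈ s, v j ^ 2 with hS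
  have hS0 : S ≠ 0 := sum_sq_ne_zero_of_sum_mul_eq_one s h
  calc ∑ i ∈ s, (a i - v i / S) ^ 2
      = ∑ i ∈ s, a i ^ 2 - 2 / S * ∑ i ∈ s, a i * v i + 1 / S ^ 2 * S := by
        rw [hS, mul_sum, mul_sum, ← sum_sub_distrib, ← sum_add_distrib]
        refine sum_congr rfl fun i _ => ?_
        ring
    _ = ∑ i ∈ s, a i ^ 2 - 1 / S := by
        rw [h]
        field_simp
        ring

theorem one_div_sum_sq_le_sum_sq (h : ∑ i ∈ s, a i * v i = 1) :
    1 / ∑ i ∈ s, v i ^ 2 ≤ ∑ i ∈ s, a i ^ 2 := by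
  have := sum_nonneg fun i (_ : i ∈ s) => sq_nonneg (a i - v i / ∑ j ∈ s, v j ^ 2)
  linarith [sum_sq_sub_div_sum_sq s h]

theorem sum_sq_eq_one_div_iff (h : ∑ i ∈ s, a i * v i = 1) :
    ∑ i ∈ s, a i ^ 2 = 1 / ∑ i ∈ s, v i ^ 2 ↔ ∀ i ∈ s, a i = v i / ∑ j ∈ s, v j ^ 2 := by
  rw [← sub_eq_zero, ← sum_sq_sub_div_sum_sq s h,
    sum_eq_zero_iff_of_nonneg fun i _ => sq_nonneg _]
  simp only [sq_eq_zero_iff, sub_eq_zero]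

end Projection

theorem stmt17_general (n : ℕ) (X : Fin n → ℝ)
    (Xbar SXX : ℝ)
    (hSXX : SXX = ∑ i, (X i - Xbar) ^ 2)
    (α : Fin n → ℝ)
    (h1 : ∑ i, α i = 0)
    (h2 : ∑ i, α i * X i = 1) :
    1 / SXX ≤ ∑ i, (α i) ^ 2 ∧
    (∑ i, (α i) ^ 2 = 1 / SXX ↔ ∀ i, α i = (X i - Xbar) / SXX) := by
  have hcentred : ∑ i, α i * (X i - Xbar) = 1 := by
    simp only [mul_sub, sum_sub_distrib, ← sum_mul, h1, h2, zero_mul, sub_zero]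
  subst hSXX
  exact ⟨one_div_sum_sq_le_sum_sq univ hcentred,
    by simpa only [mem_univ, forall_const] using sum_sq_eq_one_div_iff univ hcentred⟩

theorem stmt17 (n : ℕ) (hn : 1 ≤ n) (X : Fin n → ℝ)
    (Xbar SXX : ℝ)
    (hXbar : Xbar = (1 / (n : ℝ)) * ∑ i, X i)
    (hSXX : SXX = ∑ i, (X i - Xbar) ^ 2)
    (hpos : 0 < SXX)
    (α : Fin n → ℝ)
    (h1 : ∑ i, α i = 0)
    (h2 : ∑ i, α i * X i = 1) :
    1 / SXX ≤ ∑ i, (α i) ^ 2 ∧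
    (∑ i, (α i) ^ 2 = 1 / SXX ↔ ∀ i, α i = (X i - Xbar) / SXX) :=
  stmt17_general n X Xbar SXX hSXX α h1 h2
end

section
/- Neyman–Pearson lemma: the likelihood ratio test is most powerful among tests of equal or smaller size. Precisely, for c ≥ 0 let R = {x : f₁(x) ≥ c·f₀(x)} be the likelihood-ratio rejection region. Then for every measurable set S with μ₀(S) ≤ μ₀(R), one has μ₁(S) ≤ μ₁(R); i.e., no test whose type I error probability does not exceed that of the likelihood ratio test can have larger power. -/
open MeasureTheory
open scoped ENNReal

theorem stmt18 {𝒳 : Type*} [MeasurableSpace 𝒳] (ν μ0 μ1 : Measure 𝒳)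
    [IsProbabilityMeasure μ0] [IsProbabilityMeasure μ1]
    (f0 f1 : 𝒳 → ℝ≥0∞) (hf0 : Measurable f0) (hf1 : Measurable f1)
    (hμ0 : ∀ A, MeasurableSet A → μ0 A = ∫⁻ x in A, f0 x ∂ν)
    (hμ1 : ∀ A, MeasurableSet A → μ1 A = ∫⁻ x in A, f1 x ∂ν)
    (c : ℝ) (hc : 0 ≤ c)
    (R : Set 𝒳) (hR : R = {x | ENNReal.ofReal c * f0 x ≤ f1 x})
    (S : Set 𝒳) (hS : MeasurableSet S) (hsize : μ0 S ≤ μ0 R) :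
    μ1 S ≤ μ1 R := by
  have hRm : MeasurableSet R := by
    rw [hR]
    exact measurableSet_le (hf0.const_mul _) hf1
  -- On S \ R, f1 ≤ c * f0
  have h1 : μ1 (S \ R) ≤ ENNReal.ofReal c * μ0 (S \ R) := by
    rw [hμ1 _ (hS.diff hRm), hμ0 _ (hS.diff hRm), ← lintegral_const_mul _ hf0]
    refine setLIntegral_mono (hf0.const_mul _) ?_
    intro x hx
    have : ¬ (ENNReal.ofReal c * f0 x ≤ f1 x) := by
      intro h
      exact hx.2 (by rw [hR]; exact h)
    exact (not_le.mp this).le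
  -- On R \ S, c * f0 ≤ f1
  have h2 : ENNReal.ofReal c * μ0 (R \ S) ≤ μ1 (R \ S) := by
    rw [hμ1 _ (hRm.diff hS), hμ0 _ (hRm.diff hS), ← lintegral_const_mul _ hf0]
    refine setLIntegral_mono hf1 ?_
    intro x hx
    have := hx.1
    rw [hR] at this
    exact this
  -- μ0 (S \ R) ≤ μ0 (R \ S)
  have h3 : μ0 (S \ R) ≤ μ0 (R \ S) := by
    have e1 : μ0 (S ∩ R) + μ0 (S \ R) = μ0 S := measure_inter_add_diff S hRm
    have e2 : μ0 (S ∩ R) + μ0 (R \ S) = μ0 R := by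
      rw [Set.inter_comm]; exact measure_inter_add_diff R hS
    have := hsize
    rw [← e1, ← e2] at this
    exact (ENNReal.add_le_add_iff_left (measure_ne_top μ0 _)).mp this
  calc μ1 S = μ1 (S ∩ R) + μ1 (S \ R) := (measure_inter_add_diff S hRm).symm
    _ ≤ μ1 (S ∩ R) + ENNReal.ofReal c * μ0 (S \ R) := by gcongr
    _ ≤ μ1 (S ∩ R) + ENNReal.ofReal c * μ0 (R \ S) := by gcongr
    _ ≤ μ1 (S ∩ R) + μ1 (R \ S) := by gcongr
    _ = μ1 R := by rw [Set.inter_comm]; exact measure_inter_add_diff R hS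
end
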